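/- Let U be a random vector taking values in the nonnegative orthant of ℝ^n, Y = 𝒫(U), and suppose E[U | Y = y] = H y + c for every y ∈ ℤ^n_{≥0}, for some matrix H ∈ ℝ^{n×n} with entries h_ij and vector c ∈ ℝ^n. Then for every y ∈ ℤ^n_{≥0} with P_Y(y) > 0 and every i ∈ [1:n], P_Y(y + 1_i)/P_Y(y) = (Σ_{j=1}^n h_ij y_j + c_i)/(y_i + 1). -/

import Mathlib

open MeasureTheory ProbabilityTheory

noncomputable section

/-- The probability mass function of the Poisson distribution with (real) mean `m`,
evaluated at `k` (with the convention `0 ^ 0 = 1`). -/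
def poissonP (m : ℝ) (k : ℕ) : ℝ := m ^ k * Real.exp (-m) / (Nat.factorial k)

/-- `Y = 𝒫(U)` : `U` takes values in the nonnegative orthant and, conditionally on `U = u`,
the coordinates of `Y` are independent with `Y i` Poisson distributed with mean `u i`. -/
def IsPoissonObs {Ω : Type} [MeasurableSpace Ω] (μ : Measure Ω) {n : ℕ}
    (U : Ω → Fin n → ℝ) (Y : Ω → Fin n → ℕ) : Prop :=
  Measurable U ∧ Measurable Y ∧ (∀ ω i, 0 ≤ U ω i) ∧
    ∀ (y : Fin n → ℕ) (B : Set (Fin n → ℝ)), MeasurableSet B →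
      (μ {ω | Y ω = y ∧ U ω ∈ B}).toReal
        = ∫ ω in {ω | U ω ∈ B}, ∏ i, poissonP (U ω i) (y i) ∂μ

/-- Conditional expectation of `f` given the event `A`. -/
def condExpEvent {Ω : Type} [MeasurableSpace Ω] (μ : Measure Ω) (A : Set Ω)
    (f : Ω → ℝ) : ℝ :=
  (∫ ω in A, f ω ∂μ) / (μ A).toReal

/-!
Conditionally on `U = u`, the law of `Y` is the product Poisson density
`G_y(u) = poissonDensity y u`, which satisfies `(y_i + 1) G_{y + 1_i}(u) = u_i G_y(u)`.
Integrating against the law of `U` gives the Robbins-type identity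
`(y_i + 1) P_Y(y + 1_i) = E[U_i ; Y = y]`, and the right-hand side
is `(H y + c)_i P_Y(y)` by the linearity of the conditional mean.
-/

lemma poissonP_nonneg {m : ℝ} (hm : 0 ≤ m) (k : ℕ) : 0 ≤ poissonP m k := by
  unfold poissonP
  positivity

lemma poissonP_le_one {m : ℝ} (hm : 0 ≤ m) (k : ℕ) : poissonP m k ≤ 1 :=
  calc poissonP m k = m ^ k / k.factorial * Real.exp (-m) := by unfold poissonP; ring
    _ ≤ Real.exp m * Real.exp (-m) := by
      gcongr
      exact Real.pow_div_factorial_le_exp m hm k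
    _ = 1 := by rw [← Real.exp_add, add_neg_cancel, Real.exp_zero]

lemma measurable_poissonP (k : ℕ) : Measurable fun m => poissonP m k := by
  unfold poissonP
  fun_prop

lemma succ_mul_poissonP_succ (m : ℝ) (k : ℕ) :
    ((k : ℝ) + 1) * poissonP m (k + 1) = m * poissonP m k := by
  unfold poissonP
  rw [Nat.factorial_succ, pow_succ]
  push_cast
  field_simp

def poissonDensity {ι : Type*} [Fintype ι] (y : ι → ℕ) (u : ι → ℝ) : ℝ :=
  ∏ j, poissonP (u j) (y j)

section poissonDensity

variable {ι : Type*} [Fintype ι]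

lemma poissonDensity_nonneg (y : ι → ℕ) {u : ι → ℝ} (hu : ∀ j, 0 ≤ u j) :
    0 ≤ poissonDensity y u :=
  Finset.prod_nonneg fun j _ => poissonP_nonneg (hu j) _

lemma poissonDensity_le_one (y : ι → ℕ) {u : ι → ℝ} (hu : ∀ j, 0 ≤ u j) :
    poissonDensity y u ≤ 1 :=
  Finset.prod_le_one (fun j _ => poissonP_nonneg (hu j) _) fun j _ => poissonP_le_one (hu j) _

lemma measurable_poissonDensity (y : ι → ℕ) : Measurable (poissonDensity y) :=
  Finset.measurable_prod _ fun j _ => (measurable_poissonP (y j)).comp (measurable_pi_apply j)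

lemma succ_mul_poissonDensity_add_single [DecidableEq ι] (y : ι → ℕ) (u : ι → ℝ) (i : ι) :
    ((y i : ℝ) + 1) * poissonDensity (y + Pi.single i 1) u = u i * poissonDensity y u := by
  have hrest : ∀ j ∈ ({i}ᶜ : Finset ι),
      poissonP (u j) ((y + Pi.single i 1 : ι → ℕ) j) = poissonP (u j) (y j) := by
    intro j hj
    rw [Pi.add_apply, Pi.single_eq_of_ne (Finset.notMem_singleton.mp (Finset.mem_compl.mp hj)),
      add_zero]
  unfold poissonDensity
  rw [Fintype.prod_eq_mul_prod_compl i, Fintype.prod_eq_mul_prod_compl i,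
    Finset.prod_congr rfl hrest, Pi.add_apply, Pi.single_eq_same, ← mul_assoc,
    succ_mul_poissonP_succ, mul_assoc]

end poissonDensity

namespace IsPoissonObs

variable {Ω : Type} [MeasurableSpace Ω] {μ : Measure Ω} {n : ℕ} {U : Ω → Fin n → ℝ}
  {Y : Ω → Fin n → ℕ}

lemma measurable_mean (hPo : IsPoissonObs μ U Y) : Measurable U := hPo.1

lemma mean_nonneg (hPo : IsPoissonObs μ U Y) (ω : Ω) (i : Fin n) : 0 ≤ U ω i := hPo.2.2.1 ω i

lemma measure_inter_preimage [IsFiniteMeasure μ] (hPo : IsPoissonObs μ U Y) (y : Fin n → ℕ)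
    {B : Set (Fin n → ℝ)} (hB : MeasurableSet B) :
    μ ({ω | Y ω = y} ∩ U ⁻¹' B)
      = ∫⁻ ω in U ⁻¹' B, ENNReal.ofReal (poissonDensity y (U ω)) ∂μ := by
  obtain ⟨hU, -, hU0, hlaw⟩ := hPo
  have hint : Integrable (fun ω => poissonDensity y (U ω)) (μ.restrict (U ⁻¹' B)) := by
    refine Integrable.of_bound ((measurable_poissonDensity y).comp hU).aestronglyMeasurable 1
      (Filter.Eventually.of_forall fun ω => ?_)
    rw [Real.norm_of_nonneg (poissonDensity_nonneg y (hU0 ω))]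
    exact poissonDensity_le_one y (hU0 ω)
  rw [← ENNReal.ofReal_toReal (measure_ne_top μ _)]
  exact (congrArg ENNReal.ofReal (hlaw y B hB)).trans <| ofReal_integral_eq_lintegral_ofReal hint
    (Filter.Eventually.of_forall fun ω => poissonDensity_nonneg y (hU0 ω))

lemma map_restrict_eq_withDensity [IsFiniteMeasure μ] (hPo : IsPoissonObs μ U Y)
    (y : Fin n → ℕ) :
    (μ.restrict {ω | Y ω = y}).map U
      = (μ.map U).withDensity fun u => ENNReal.ofReal (poissonDensity y u) := by
  have hU := hPo.measurable_mean
  ext B hB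
  rw [Measure.map_apply hU hB, Measure.restrict_apply (hU hB), withDensity_apply _ hB,
    setLIntegral_map hB (measurable_poissonDensity y).ennreal_ofReal hU, Set.inter_comm]
  exact hPo.measure_inter_preimage y hB

lemma setLIntegral_comp_eq [IsFiniteMeasure μ] (hPo : IsPoissonObs μ U Y) (y : Fin n → ℕ)
    {f : (Fin n → ℝ) → ENNReal} (hf : Measurable f) :
    ∫⁻ ω in {ω | Y ω = y}, f (U ω) ∂μ
      = ∫⁻ ω, ENNReal.ofReal (poissonDensity y (U ω)) * f (U ω) ∂μ := by
  have hU := hPo.measurable_mean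
  have hG := (measurable_poissonDensity y).ennreal_ofReal
  rw [← lintegral_map hf hU, hPo.map_restrict_eq_withDensity y,
    lintegral_withDensity_eq_lintegral_mul _ hG hf]
  exact lintegral_map (hG.mul hf) hU

lemma ofReal_succ_mul_measure_add_single [IsFiniteMeasure μ] (hPo : IsPoissonObs μ U Y)
    (y : Fin n → ℕ) (i : Fin n) :
    ENNReal.ofReal ((y i : ℝ) + 1) * μ {ω | Y ω = y + Pi.single i 1}
      = ∫⁻ ω in {ω | Y ω = y}, ENNReal.ofReal (U ω i) ∂μ := by
  rw [← setLIntegral_one, hPo.setLIntegral_comp_eq _ measurable_const,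
    hPo.setLIntegral_comp_eq y (measurable_pi_apply i).ennreal_ofReal,
    ← lintegral_const_mul' _ _ ENNReal.ofReal_ne_top]
  refine lintegral_congr fun ω => ?_
  rw [mul_one, ← ENNReal.ofReal_mul (by positivity), succ_mul_poissonDensity_add_single,
    ENNReal.ofReal_mul (hPo.mean_nonneg ω i), mul_comm]

end IsPoissonObs

/-- if `Y = 𝒫(U)` and `E[U | Y = y] = H y + c` for all `y`, then for
every `y` with `P_Y(y) > 0` and every `i`,
`P_Y(y + 1_i)/P_Y(y) = (∑_j h_ij y_j + c_i)/(y_i + 1)`. -/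
theorem stmt4 {Ω : Type} [MeasurableSpace Ω] (μ : Measure Ω) [IsProbabilityMeasure μ]
    {n : ℕ} (U : Ω → Fin n → ℝ) (Y : Ω → Fin n → ℕ)
    (hPo : IsPoissonObs μ U Y)
    (H : Matrix (Fin n) (Fin n) ℝ) (c : Fin n → ℝ)
    (hlin : ∀ y : Fin n → ℕ, μ {ω | Y ω = y} ≠ 0 → ∀ i,
      condExpEvent μ {ω | Y ω = y} (fun ω => U ω i) = ∑ j, H i j * (y j : ℝ) + c i) :
    ∀ y : Fin n → ℕ, 0 < (μ {ω | Y ω = y}).toReal → ∀ i : Fin n,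
      (μ {ω | Y ω = y + Pi.single i 1}).toReal / (μ {ω | Y ω = y}).toReal
        = (∑ j, H i j * (y j : ℝ) + c i) / ((y i : ℝ) + 1) := by
  intro y hpos i
  have hrobbins : ((y i : ℝ) + 1) * (μ {ω | Y ω = y + Pi.single i 1}).toReal
      = ∫ ω in {ω | Y ω = y}, U ω i ∂μ := by
    rw [integral_eq_lintegral_of_nonneg_ae
        (Filter.Eventually.of_forall fun ω => hPo.mean_nonneg ω i)
        ((measurable_pi_apply i).comp hPo.measurable_mean).aestronglyMeasurable,
      ← hPo.ofReal_succ_mul_measure_add_single y i, ENNReal.toReal_mul,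
      ENNReal.toReal_ofReal (by positivity)]
  have hmean := hlin y (fun h => by simp [h] at hpos) i
  rw [condExpEvent, div_eq_iff hpos.ne'] at hmean
  rw [div_eq_div_iff hpos.ne' (by positivity)]
  linarith
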